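/- arXiv:0911.1983 — 2 statements merged into one kernel-verified Lean document; each statement's English description precedes it below -/
import Mathlib

section
/- Let V₁, V₂ be closed subspaces of a Hilbert space with ε = cos ∠(V₁,V₂) < 1. Then for any w ∈ H, d₀(w)² ≤ (d₁(w)² + 2ε d₁(w) d₂(w) + d₂(w)²) / (1 − ε²), where d₀, d₁, d₂ denote the distances from w to V₁ ∩ V₂, V₁, V₂ respectively. Equivalently, d₀(w)² ≤ dᵀ A⁻¹ d where A = [[1, −ε],[−ε, 1]] and d = (d₁(w), d₂(w))ᵀ. -/
/-!
Put `P = P_{V₁ ⊓ V₂}`, `u = w - P w` and `aᵢ = P_{Vᵢ} w - P w`. Then `aᵢ ∈ Vᵢ ⊓ (V₁ ⊓ V₂)ᗮ`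
and `u - aᵢ = w - P_{Vᵢ} w ⊥ aᵢ`, so `‖u‖ = d₀`, `‖u - aᵢ‖ = dᵢ` and `‖aᵢ‖² + dᵢ² = d₀²`.
With `θᵢ` the angle between `aᵢ` and `u`, the spherical triangle inequality
`∠(a₁, a₂) ≤ θ₁ + θ₂` and `cos ∠(a₁, a₂) ≤ ε` give `cos (θ₁ + θ₂) ≤ ε`, that is
`‖a₁‖ ‖a₂‖ - d₁ d₂ ≤ ε d₀²`. The claim follows from the identity
`d₀² (d₁² + 2ε d₁ d₂ + d₂² - (1 - ε²) d₀²)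
  = (ε d₀² - ‖a₁‖ ‖a₂‖ + d₁ d₂) (ε d₀² + ‖a₁‖ ‖a₂‖ + d₁ d₂)`,
whose second factor is at least `2 ‖a₁‖ ‖a₂‖ ≥ 0`.
-/

open scoped RealInnerProductSpace

/-- The cosine of the Friedrichs angle between two subspaces. -/
noncomputable def friedrichsCos {H : Type*} [NormedAddCommGroup H] [InnerProductSpace ℝ H]
    (V₁ V₂ : Submodule ℝ H) : ℝ :=
  sSup {r : ℝ | ∃ v₁ v₂ : H, v₁ ∈ V₁ ∧ v₂ ∈ V₂ ∧ ‖v₁‖ = 1 ∧ ‖v₂‖ = 1 ∧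
    v₁ ∈ (V₁ ⊓ V₂)ᗮ ∧ v₂ ∈ (V₁ ⊓ V₂)ᗮ ∧ r = |⟪v₁, v₂⟫|}

section General

variable {𝕜 E : Type*} [RCLike 𝕜] [NormedAddCommGroup E] [InnerProductSpace 𝕜 E]

lemma Submodule.infDist_eq_norm_sub_starProjection (K : Submodule 𝕜 E)
    [K.HasOrthogonalProjection] (w : E) :
    Metric.infDist w (K : Set E) = ‖w - K.starProjection w‖ := by
  rw [Metric.infDist_eq_iInf, K.starProjection_minimal]
  simp_rw [dist_eq_norm]
  rfl

lemma Submodule.starProjection_sub_starProjection_mem_orthogonal {U W : Submodule 𝕜 E}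
    [U.HasOrthogonalProjection] [W.HasOrthogonalProjection] (h : U ≤ W) (x : E) :
    W.starProjection x - U.starProjection x ∈ Uᗮ := by
  rw [← U.starProjection_apply_eq_zero_iff, map_sub, ← ContinuousLinearMap.comp_apply,
    U.starProjection_comp_starProjection_of_le h,
    U.starProjection_eq_self_iff.2 (U.starProjection_apply_mem x), sub_self]

lemma norm_sq_add_norm_sub_sq_of_inner_sub_eq_zero {u a : E}
    (h : inner 𝕜 a (u - a) = 0) : ‖a‖ ^ 2 + ‖u - a‖ ^ 2 = ‖u‖ ^ 2 := by
  simpa [sq] using (norm_add_sq_eq_norm_sq_add_norm_sq_of_inner_eq_zero a (u - a) h).symm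

end General

section Real

variable {E : Type*} [NormedAddCommGroup E] [InnerProductSpace ℝ E]

lemma norm_mul_norm_mul_sub_le_sq_mul_inner {u a₁ a₂ : E}
    (h₁ : ⟪a₁, u - a₁⟫ = 0) (h₂ : ⟪a₂, u - a₂⟫ = 0) :
    ‖a₁‖ * ‖a₂‖ * (‖a₁‖ * ‖a₂‖ - ‖u - a₁‖ * ‖u - a₂‖) ≤ ‖u‖ ^ 2 * ⟪a₁, a₂⟫ := by
  have hp₁ := norm_sq_add_norm_sub_sq_of_inner_sub_eq_zero h₁
  have hp₂ := norm_sq_add_norm_sub_sq_of_inner_sub_eq_zero h₂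
  have hu₁ : ⟪a₁, u⟫ = ‖a₁‖ ^ 2 := by
    rwa [inner_sub_right, real_inner_self_eq_norm_sq, sub_eq_zero] at h₁
  have hu₂ : ⟪u, a₂⟫ = ‖a₂‖ ^ 2 := by
    rwa [inner_sub_right, real_inner_self_eq_norm_sq, sub_eq_zero, real_inner_comm] at h₂
  rcases (norm_nonneg u).eq_or_lt with hu | hu
  · have : ‖a₁‖ = 0 := by nlinarith [norm_nonneg a₁, norm_nonneg (u - a₁)]
    simp [this, ← hu]
  -- `rᵢ` is the component of `‖u‖² aᵢ` orthogonal to `u`; Cauchy–Schwarz for `r₁, r₂` is the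
  -- spherical triangle inequality.
  set r₁ := ‖u‖ ^ 2 • a₁ - ‖a₁‖ ^ 2 • u
  set r₂ := ‖u‖ ^ 2 • a₂ - ‖a₂‖ ^ 2 • u
  have hr : ⟪r₁, r₂⟫ = ‖u‖ ^ 2 * (‖u‖ ^ 2 * ⟪a₁, a₂⟫ - ‖a₁‖ ^ 2 * ‖a₂‖ ^ 2) := by
    simp only [r₁, r₂, inner_sub_left, inner_sub_right, real_inner_smul_left,
      real_inner_smul_right, real_inner_self_eq_norm_sq, hu₁, hu₂]
    ring
  have hnorm {a : E} (h : ⟪a, u⟫ = ‖a‖ ^ 2) (hp : ‖a‖ ^ 2 + ‖u - a‖ ^ 2 = ‖u‖ ^ 2) :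
      ‖‖u‖ ^ 2 • a - ‖a‖ ^ 2 • u‖ = ‖u‖ * (‖a‖ * ‖u - a‖) := by
    rw [← sq_eq_sq₀ (norm_nonneg _) (by positivity), ← real_inner_self_eq_norm_sq]
    simp only [inner_sub_left, inner_sub_right, real_inner_smul_left, real_inner_smul_right,
      real_inner_self_eq_norm_sq, norm_smul, norm_pow, norm_norm, h, real_inner_comm a u]
    linear_combination (-(‖u‖ ^ 2 * ‖a‖ ^ 2)) * hp
  have hcs : -(‖r₁‖ * ‖r₂‖) ≤ ⟪r₁, r₂⟫ := neg_le_of_abs_le (abs_real_inner_le_norm r₁ r₂)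
  rw [hr, hnorm hu₁ hp₁, hnorm (by rwa [real_inner_comm]) hp₂] at hcs
  nlinarith [pow_pos hu 2]

lemma norm_mul_norm_sub_le_mul_sq_of_inner_le {u a₁ a₂ : E} {ε : ℝ} (hε : 0 ≤ ε)
    (h₁ : ⟪a₁, u - a₁⟫ = 0) (h₂ : ⟪a₂, u - a₂⟫ = 0) (h : ⟪a₁, a₂⟫ ≤ ε * (‖a₁‖ * ‖a₂‖)) :
    ‖a₁‖ * ‖a₂‖ - ‖u - a₁‖ * ‖u - a₂‖ ≤ ε * ‖u‖ ^ 2 := by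
  rcases (mul_nonneg (norm_nonneg a₁) (norm_nonneg a₂)).eq_or_lt with h0 | hpos
  · rw [← h0, zero_sub]
    nlinarith [mul_nonneg (norm_nonneg (u - a₁)) (norm_nonneg (u - a₂)), sq_nonneg ‖u‖]
  · refine le_of_mul_le_mul_left ?_ hpos
    calc _ ≤ ‖u‖ ^ 2 * ⟪a₁, a₂⟫ := norm_mul_norm_mul_sub_le_sq_mul_inner h₁ h₂
      _ ≤ ‖u‖ ^ 2 * (ε * (‖a₁‖ * ‖a₂‖)) := by gcongr
      _ = _ := by ring

lemma friedrichsCos_nonneg (V₁ V₂ : Submodule ℝ E) : 0 ≤ friedrichsCos V₁ V₂ :=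
  Real.sSup_nonneg fun _ ⟨_, _, _, _, _, _, _, _, hr⟩ ↦ hr ▸ abs_nonneg _

lemma real_inner_le_friedrichsCos_mul {V₁ V₂ : Submodule ℝ E} {x y : E} (hx : x ∈ V₁)
    (hx' : x ∈ (V₁ ⊓ V₂)ᗮ) (hy : y ∈ V₂) (hy' : y ∈ (V₁ ⊓ V₂)ᗮ) :
    ⟪x, y⟫ ≤ friedrichsCos V₁ V₂ * (‖x‖ * ‖y‖) := by
  rcases eq_or_ne x 0 with rfl | hx0
  · simp
  rcases eq_or_ne y 0 with rfl | hy0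
  · simp
  have hbdd : BddAbove {r : ℝ | ∃ v₁ v₂ : E, v₁ ∈ V₁ ∧ v₂ ∈ V₂ ∧ ‖v₁‖ = 1 ∧ ‖v₂‖ = 1 ∧
      v₁ ∈ (V₁ ⊓ V₂)ᗮ ∧ v₂ ∈ (V₁ ⊓ V₂)ᗮ ∧ r = |⟪v₁, v₂⟫|} := by
    refine ⟨1, ?_⟩
    rintro _ ⟨v₁, v₂, -, -, h₁, h₂, -, -, rfl⟩
    simpa [h₁, h₂] using abs_real_inner_le_norm v₁ v₂
  have hunit : |⟪‖x‖⁻¹ • x, ‖y‖⁻¹ • y⟫| ≤ friedrichsCos V₁ V₂ :=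
    le_csSup hbdd ⟨_, _, V₁.smul_mem _ hx, V₂.smul_mem _ hy, norm_smul_inv_norm hx0,
      norm_smul_inv_norm hy0, Submodule.smul_mem _ _ hx', Submodule.smul_mem _ _ hy', rfl⟩
  rw [real_inner_smul_left, real_inner_smul_right, abs_mul, abs_mul, abs_inv, abs_inv, abs_norm,
    abs_norm, ← mul_assoc, ← mul_inv, inv_mul_le_iff₀ (by positivity)] at hunit
  exact (le_abs_self _).trans (by linarith)

end Real

lemma sq_le_quadratic_form_div_of_mul_sub_mul_le {x s₁ s₂ d₁ d₂ ε : ℝ} (hs₁ : 0 ≤ s₁)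
    (hs₂ : 0 ≤ s₂) (hε₀ : 0 ≤ ε) (hε : ε < 1) (h₁ : s₁ ^ 2 + d₁ ^ 2 = x ^ 2)
    (h₂ : s₂ ^ 2 + d₂ ^ 2 = x ^ 2) (h : s₁ * s₂ - d₁ * d₂ ≤ ε * x ^ 2) :
    x ^ 2 ≤ (d₁ ^ 2 + 2 * ε * d₁ * d₂ + d₂ ^ 2) / (1 - ε ^ 2) := by
  rw [le_div_iff₀ (by nlinarith)]
  have key : x ^ 2 * (d₁ ^ 2 + 2 * ε * d₁ * d₂ + d₂ ^ 2 - x ^ 2 * (1 - ε ^ 2)) =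
      (ε * x ^ 2 - (s₁ * s₂ - d₁ * d₂)) * (ε * x ^ 2 + (s₁ * s₂ + d₁ * d₂)) := by
    linear_combination s₂ ^ 2 * h₁ + (x ^ 2 - d₁ ^ 2) * h₂
  have hprod : 0 ≤ x ^ 2 * (d₁ ^ 2 + 2 * ε * d₁ * d₂ + d₂ ^ 2 - x ^ 2 * (1 - ε ^ 2)) :=
    key ▸ mul_nonneg (by linarith) (by nlinarith [mul_nonneg hs₁ hs₂])
  rcases (sq_nonneg x).eq_or_lt with hx | hx
  · have hd₁ : d₁ = 0 := by nlinarith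
    have hd₂ : d₂ = 0 := by nlinarith
    simp [hd₁, hd₂, ← hx]
  · linarith [(mul_nonneg_iff_of_pos_left hx).1 hprod]

theorem dist_inter_sq_le_quadratic_form
    {H : Type*} [NormedAddCommGroup H] [InnerProductSpace ℝ H] [CompleteSpace H]
    (V₁ V₂ : Submodule ℝ H) (hV₁ : IsClosed (V₁ : Set H)) (hV₂ : IsClosed (V₂ : Set H))
    (hε : friedrichsCos V₁ V₂ < 1) (w : H) :
    Metric.infDist w ((V₁ ⊓ V₂ : Submodule ℝ H) : Set H) ^ 2 ≤
      (Metric.infDist w (V₁ : Set H) ^ 2 +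
        2 * friedrichsCos V₁ V₂ * Metric.infDist w (V₁ : Set H) * Metric.infDist w (V₂ : Set H) +
        Metric.infDist w (V₂ : Set H) ^ 2) / (1 - friedrichsCos V₁ V₂ ^ 2) := by
  have : CompleteSpace V₁ := hV₁.completeSpace_coe
  have : CompleteSpace V₂ := hV₂.completeSpace_coe
  have : CompleteSpace ↥(V₁ ⊓ V₂) := (hV₁.inter hV₂).completeSpace_coe
  set P := (V₁ ⊓ V₂).starProjection
  have hproj (K : Submodule ℝ H) [K.HasOrthogonalProjection] (hK : V₁ ⊓ V₂ ≤ K) :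
      K.starProjection w - P w ∈ K ∧ K.starProjection w - P w ∈ (V₁ ⊓ V₂)ᗮ ∧
        ⟪K.starProjection w - P w, (w - P w) - (K.starProjection w - P w)⟫ = 0 ∧
        Metric.infDist w K = ‖(w - P w) - (K.starProjection w - P w)‖ := by
    have hmem :=
      K.sub_mem (K.starProjection_apply_mem w) (hK ((V₁ ⊓ V₂).starProjection_apply_mem w))
    rw [sub_sub_sub_cancel_right, K.infDist_eq_norm_sub_starProjection]
    exact ⟨hmem, Submodule.starProjection_sub_starProjection_mem_orthogonal hK w,
      K.inner_right_of_mem_orthogonal hmem (K.sub_starProjection_mem_orthogonal w), rfl⟩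
  obtain ⟨ha₁, ha₁', h₁, hd₁⟩ := hproj V₁ inf_le_left
  obtain ⟨ha₂, ha₂', h₂, hd₂⟩ := hproj V₂ inf_le_right
  rw [(V₁ ⊓ V₂).infDist_eq_norm_sub_starProjection, hd₁, hd₂]
  have hε₀ := friedrichsCos_nonneg V₁ V₂
  exact sq_le_quadratic_form_div_of_mul_sub_mul_le (norm_nonneg _) (norm_nonneg _) hε₀ hε
    (norm_sq_add_norm_sub_sq_of_inner_sub_eq_zero h₁)
    (norm_sq_add_norm_sub_sq_of_inner_sub_eq_zero h₂)
    (norm_mul_norm_sub_le_mul_sq_of_inner_le hε₀ h₁ h₂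
      (real_inner_le_friedrichsCos_mul ha₁ ha₁' ha₂ ha₂'))
end

section
/- Let V₁, V₂, V₃ be closed subspaces of a Hilbert space with ε_{ij} = cos ∠(V_i, V_j) and ε₁₃, ε₂₃ < 1. Then cos ∠(V₁ + V₃, V₂ + V₃) ≤ (ε₁₂ + ε₁₃ ε₂₃) / (√(1 − ε₁₃²) √(1 − ε₂₃²)), and the same bound holds for cos ∠(V₁ ∩ V₃, V₂ ∩ V₃). -/
/-!
Let `P` be the orthogonal projection onto `V₃` and `R` the one onto `V₁ ∩ V₂`. A unit vector of
`V₁ + V₃` orthogonal to `V₃` is `a - P a` for some `a ∈ V₁ ⊖ (V₁ ∩ V₃)`, and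
`‖a - P a‖ ≥ √(1 - ε₁₃²) ‖a‖` because `‖P a‖ ≤ ε₁₃ ‖a‖`. When `a - P a` and `b - P b` are
orthogonal to `V₁ ∩ V₂`,
`⟪a - P a, b - P b⟫ = ⟪a - R a, b - R b⟫ - ⟪P a - R a, P b - R b⟫`,
and the two terms are at most `ε₁₂ ‖a‖ ‖b‖` and `ε₁₃ ε₂₃ ‖a‖ ‖b‖`; this gives the bound for sums.

The lower bound on `a ↦ a - P a` also shows that `V + W` is closed once `cos ∠(V, W) < 1`. Hence
`cos ∠(Vᗮ, Wᗮ) = cos ∠(V, W)` and `(V₁ ∩ V₃)ᗮ = V₁ᗮ + V₃ᗮ`, and the bound for intersections is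
the bound for sums applied to `V₁ᗮ, V₂ᗮ, V₃ᗮ`.
-/

open scoped RealInnerProductSpace

open Submodule

section FriedrichsCos

variable {H : Type*} [NormedAddCommGroup H] [InnerProductSpace ℝ H]

lemma norm_sub_le_of_inner_sub_eq_zero {y p : H} (h : ⟪y - p, p⟫ = 0) : ‖y - p‖ ≤ ‖y‖ := by
  have := norm_add_sq_eq_norm_sq_add_norm_sq_real h
  rw [sub_add_cancel] at this
  nlinarith [norm_nonneg p, norm_nonneg y, norm_nonneg (y - p)]

section Basic

variable {V W : Submodule ℝ H}

lemma friedrichsCos_nonneg_s13 (V W : Submodule ℝ H) : 0 ≤ friedrichsCos V W :=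
  Real.sSup_nonneg <| by rintro _ ⟨x, y, -, -, -, -, -, -, rfl⟩; exact abs_nonneg _

lemma friedrichsCos_le {c : ℝ} (hc : 0 ≤ c)
    (h : ∀ x ∈ V, ∀ y ∈ W, x ∈ (V ⊓ W)ᗮ → y ∈ (V ⊓ W)ᗮ → ‖x‖ = 1 → ‖y‖ = 1 → |⟪x, y⟫| ≤ c) :
    friedrichsCos V W ≤ c :=
  Real.sSup_le (fun _ ⟨x, y, hx, hy, hx1, hy1, hx', hy', hr⟩ => hr ▸ h x hx y hy hx' hy' hx1 hy1) hc

lemma friedrichsCos_le_one (V W : Submodule ℝ H) : friedrichsCos V W ≤ 1 :=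
  friedrichsCos_le zero_le_one fun x _ y _ _ _ hx hy => by
    simpa [hx, hy] using abs_real_inner_le_norm x y

lemma abs_inner_le_friedrichsCos_mul {x y : H} (hx : x ∈ V) (hy : y ∈ W) (hx' : x ∈ (V ⊓ W)ᗮ)
    (hy' : y ∈ (V ⊓ W)ᗮ) : |⟪x, y⟫| ≤ friedrichsCos V W * (‖x‖ * ‖y‖) := by
  rcases eq_or_ne x 0 with rfl | hx0
  · simp
  rcases eq_or_ne y 0 with rfl | hy0
  · simp
  have hunit : |⟪‖x‖⁻¹ • x, ‖y‖⁻¹ • y⟫| ≤ friedrichsCos V W := by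
    refine le_csSup ⟨1, ?_⟩ ⟨_, _, V.smul_mem _ hx, W.smul_mem _ hy, norm_smul_inv_norm hx0,
      norm_smul_inv_norm hy0, smul_mem _ _ hx', smul_mem _ _ hy', rfl⟩
    rintro _ ⟨u, v, -, -, hu, hv, -, -, rfl⟩
    simpa [hu, hv] using abs_real_inner_le_norm u v
  rw [real_inner_smul_left, real_inner_smul_right, abs_mul, abs_mul, abs_inv, abs_inv, abs_norm,
    abs_norm, inv_mul_le_iff₀ (norm_pos_iff.2 hx0), inv_mul_le_iff₀ (norm_pos_iff.2 hy0)] at hunit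
  linarith

end Basic

section Projection

variable {V W : Submodule ℝ H} [W.HasOrthogonalProjection]

lemma real_inner_starProjection_eq_norm_sq (a : H) :
    ⟪a, W.starProjection a⟫ = ‖W.starProjection a‖ ^ 2 := by
  have h := W.starProjection_inner_eq_zero a _ (W.starProjection_apply_mem a)
  rw [inner_sub_left, sub_eq_zero] at h
  rw [h, real_inner_self_eq_norm_sq]

lemma norm_starProjection_le_friedrichsCos_mul {a : H} (ha : a ∈ V) (ha' : a ∈ (V ⊓ W)ᗮ) :
    ‖W.starProjection a‖ ≤ friedrichsCos V W * ‖a‖ := by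
  have hPa : W.starProjection a ∈ (V ⊓ W)ᗮ := by
    have h := orthogonal_le (inf_le_right : V ⊓ W ≤ W) (W.sub_starProjection_mem_orthogonal a)
    simpa using (V ⊓ W)ᗮ.sub_mem ha' h
  have h := (le_abs_self _).trans
    (abs_inner_le_friedrichsCos_mul ha (W.starProjection_apply_mem a) ha' hPa)
  rw [real_inner_starProjection_eq_norm_sq] at h
  rcases (norm_nonneg (W.starProjection a)).eq_or_lt with h0 | hpos
  · rw [← h0]
    exact mul_nonneg (friedrichsCos_nonneg_s13 V W) (norm_nonneg a)
  · exact le_of_mul_le_mul_right (by linarith) hpos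

lemma sqrt_one_sub_friedrichsCos_sq_mul_norm_le {a : H} (ha : a ∈ V) (ha' : a ∈ (V ⊓ W)ᗮ) :
    √(1 - friedrichsCos V W ^ 2) * ‖a‖ ≤ ‖a - W.starProjection a‖ := by
  have hP := norm_starProjection_le_friedrichsCos_mul ha ha'
  have hsq : (1 - friedrichsCos V W ^ 2) * ‖a‖ ^ 2 ≤ ‖a - W.starProjection a‖ ^ 2 := by
    have := W.norm_sq_eq_add_norm_sq_starProjection a
    rw [starProjection_orthogonal_val] at this
    nlinarith [norm_nonneg (W.starProjection a)]
  calc √(1 - friedrichsCos V W ^ 2) * ‖a‖ = √((1 - friedrichsCos V W ^ 2) * ‖a‖ ^ 2) := by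
        rw [Real.sqrt_mul' _ (sq_nonneg _), Real.sqrt_sq (norm_nonneg _)]
    _ ≤ √(‖a - W.starProjection a‖ ^ 2) := Real.sqrt_le_sqrt hsq
    _ = ‖a - W.starProjection a‖ := Real.sqrt_sq (norm_nonneg _)

lemma exists_sub_starProjection_eq [(V ⊓ W).HasOrthogonalProjection] {y : H} (hy : y ∈ V ⊔ W) :
    ∃ a ∈ V, a ∈ (V ⊓ W)ᗮ ∧ a - W.starProjection a = y - W.starProjection y := by
  obtain ⟨x, hx, w, hw, rfl⟩ := mem_sup.1 hy
  have hxW : (V ⊓ W).starProjection x ∈ W := (mem_inf.1 ((V ⊓ W).starProjection_apply_mem x)).2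
  refine ⟨x - (V ⊓ W).starProjection x,
    V.sub_mem hx (mem_inf.1 ((V ⊓ W).starProjection_apply_mem x)).1,
    (V ⊓ W).sub_starProjection_mem_orthogonal x, ?_⟩
  rw [map_sub, map_add, starProjection_eq_self_iff.2 hxW, starProjection_eq_self_iff.2 hw]
  abel

lemma sqrt_one_sub_friedrichsCos_sq_mul_norm_le_norm_starProjection [V.HasOrthogonalProjection]
    [(V ⊓ W).HasOrthogonalProjection] {z : H} (hz : z ∈ Wᗮ) (hzVW : z ∈ V ⊔ W) :
    √(1 - friedrichsCos V W ^ 2) * ‖z‖ ≤ ‖V.starProjection z‖ := by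
  obtain ⟨m, hm, hm', hmz⟩ := exists_sub_starProjection_eq hzVW
  rw [(W.starProjection_apply_eq_zero_iff).2 hz, sub_zero] at hmz
  have hsm := hmz ▸ sqrt_one_sub_friedrichsCos_sq_mul_norm_le hm hm'
  have hzm : ‖z‖ ^ 2 ≤ ‖V.starProjection z‖ * ‖m‖ := by
    have h1 : ⟪z, m⟫ = ‖z‖ ^ 2 := by
      rw [← sub_add_cancel m (W.starProjection m), hmz, inner_add_right,
        inner_left_of_mem_orthogonal (W.starProjection_apply_mem m) hz, add_zero,
        real_inner_self_eq_norm_sq]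
    have h2 := V.starProjection_inner_eq_zero z m hm
    rw [inner_sub_left, sub_eq_zero, h1] at h2
    exact h2.trans_le (real_inner_le_norm _ _)
  rcases (norm_nonneg z).eq_or_lt with h0 | hpos
  · rw [← h0, mul_zero]
    exact norm_nonneg _
  refine le_of_mul_le_mul_right ?_ hpos
  set s := √(1 - friedrichsCos V W ^ 2)
  calc s * ‖z‖ * ‖z‖ = s * ‖z‖ ^ 2 := by ring
    _ ≤ s * (‖V.starProjection z‖ * ‖m‖) := mul_le_mul_of_nonneg_left hzm (Real.sqrt_nonneg _)
    _ = ‖V.starProjection z‖ * (s * ‖m‖) := by ring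
    _ ≤ ‖V.starProjection z‖ * ‖z‖ := mul_le_mul_of_nonneg_left hsm (norm_nonneg _)

lemma mem_sup_of_sub_starProjection_eq {a y : H} (ha : a ∈ V)
    (h : a - W.starProjection a = y - W.starProjection y) : y ∈ V ⊔ W := by
  have hy : y = a + (W.starProjection y - W.starProjection a) := by
    linear_combination (norm := module) -h
  rw [hy]
  exact add_mem_sup ha (W.sub_mem (W.starProjection_apply_mem y) (W.starProjection_apply_mem a))

end Projection

section Sum

variable {V₁ V₂ V₃ : Submodule ℝ H}

lemma inner_sub_starProjection_eq [V₃.HasOrthogonalProjection] {a b p q : H}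
    (hp : ⟪p, b - V₃.starProjection b⟫ = 0) (hq : ⟪a - V₃.starProjection a, q⟫ = 0) :
    ⟪a - V₃.starProjection a, b - V₃.starProjection b⟫ =
      ⟪a - p, b - q⟫ - ⟪V₃.starProjection a - p, V₃.starProjection b - q⟫ := by
  have ha := V₃.starProjection_inner_eq_zero a _ (V₃.starProjection_apply_mem b)
  have hb := V₃.starProjection_inner_eq_zero b _ (V₃.starProjection_apply_mem a)
  rw [real_inner_comm] at hb
  simp only [inner_sub_left, inner_sub_right] at *
  linarith

lemma abs_inner_sub_starProjection_le [V₃.HasOrthogonalProjection]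
    [(V₁ ⊓ V₂).HasOrthogonalProjection] {a b : H}
    (ha : a ∈ V₁) (ha' : a ∈ (V₁ ⊓ V₃)ᗮ) (hb : b ∈ V₂) (hb' : b ∈ (V₂ ⊓ V₃)ᗮ)
    (hQa : a - V₃.starProjection a ∈ (V₁ ⊓ V₂)ᗮ) (hQb : b - V₃.starProjection b ∈ (V₁ ⊓ V₂)ᗮ) :
    |⟪a - V₃.starProjection a, b - V₃.starProjection b⟫| ≤
      (friedrichsCos V₁ V₂ + friedrichsCos V₁ V₃ * friedrichsCos V₂ V₃) * (‖a‖ * ‖b‖) := by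
  set P := V₃.starProjection
  set R := (V₁ ⊓ V₂).starProjection
  have hRa := (V₁ ⊓ V₂).starProjection_apply_mem a
  have hRb := (V₁ ⊓ V₂).starProjection_apply_mem b
  have hRa' := (V₁ ⊓ V₂).sub_starProjection_mem_orthogonal a
  have hRb' := (V₁ ⊓ V₂).sub_starProjection_mem_orthogonal b
  have hQaR : ⟪a - P a, R b⟫ = 0 := inner_left_of_mem_orthogonal hRb hQa
  have hQbR : ⟪R a, b - P b⟫ = 0 := inner_right_of_mem_orthogonal hRa hQb
  have hid := inner_sub_starProjection_eq hQbR hQaR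
  have h12 : |⟪a - R a, b - R b⟫| ≤ friedrichsCos V₁ V₂ * (‖a‖ * ‖b‖) := by
    refine (abs_inner_le_friedrichsCos_mul (V₁.sub_mem ha (mem_inf.1 hRa).1)
      (V₂.sub_mem hb (mem_inf.1 hRb).2) hRa' hRb').trans ?_
    gcongr
    · exact friedrichsCos_nonneg_s13 V₁ V₂
    · exact norm_sub_le_of_inner_sub_eq_zero (inner_left_of_mem_orthogonal hRa hRa')
    · exact norm_sub_le_of_inner_sub_eq_zero (inner_left_of_mem_orthogonal hRb hRb')
  have hPRa : ‖P a - R a‖ ≤ friedrichsCos V₁ V₃ * ‖a‖ := by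
    refine (norm_sub_le_of_inner_sub_eq_zero ?_).trans
      (norm_starProjection_le_friedrichsCos_mul ha ha')
    rw [show P a - R a = (a - R a) - (a - P a) by abel, inner_sub_left,
      inner_left_of_mem_orthogonal hRa hQa, inner_left_of_mem_orthogonal hRa hRa', sub_zero]
  have hPRb : ‖P b - R b‖ ≤ friedrichsCos V₂ V₃ * ‖b‖ := by
    refine (norm_sub_le_of_inner_sub_eq_zero ?_).trans
      (norm_starProjection_le_friedrichsCos_mul hb hb')
    rw [show P b - R b = (b - R b) - (b - P b) by abel, inner_sub_left,
      inner_left_of_mem_orthogonal hRb hQb, inner_left_of_mem_orthogonal hRb hRb', sub_zero]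
  have h33 : |⟪P a - R a, P b - R b⟫| ≤
      friedrichsCos V₁ V₃ * friedrichsCos V₂ V₃ * (‖a‖ * ‖b‖) :=
    (abs_real_inner_le_norm _ _).trans <| by
      nlinarith [mul_le_mul hPRa hPRb (norm_nonneg _)
        (mul_nonneg (friedrichsCos_nonneg_s13 V₁ V₃) (norm_nonneg a))]
  rw [hid]
  linarith [abs_sub (⟪a - R a, b - R b⟫) ⟪P a - R a, P b - R b⟫]

end Sum

section Complete

variable [CompleteSpace H] {V W : Submodule ℝ H}

theorem isClosed_sup_of_friedrichsCos_lt_one (hV : IsClosed (V : Set H))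
    (hW : IsClosed (W : Set H)) (h : friedrichsCos V W < 1) :
    IsClosed ((V ⊔ W : Submodule ℝ H) : Set H) := by
  have : CompleteSpace W := hW.completeSpace_coe
  have : CompleteSpace (V ⊓ W : Submodule ℝ H) := (hV.inter hW).completeSpace_coe
  set A := V ⊓ (V ⊓ W)ᗮ
  have : CompleteSpace A := (hV.inter (V ⊓ W).isClosed_orthogonal).completeSpace_coe
  set s := √(1 - friedrichsCos V W ^ 2)
  have hs : 0 < s := Real.sqrt_pos.2 (by nlinarith [friedrichsCos_nonneg_s13 V W])
  set f : A →L[ℝ] H := Wᗮ.starProjection ∘L A.subtypeL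
  have hf : AntilipschitzWith ⟨s⁻¹, by positivity⟩ f := by
    refine f.antilipschitz_of_bound fun a => ?_
    change ‖a‖ ≤ s⁻¹ * ‖f a‖
    rw [le_inv_mul_iff₀ hs]
    simpa [f] using sqrt_one_sub_friedrichsCos_sq_mul_norm_le (mem_inf.1 a.2).1 (mem_inf.1 a.2).2
  have hsup : ((V ⊔ W : Submodule ℝ H) : Set H) = Wᗮ.starProjection ⁻¹' Set.range f := by
    ext y
    constructor
    · intro hy
      obtain ⟨a, ha, ha', hay⟩ := exists_sub_starProjection_eq hy
      exact ⟨⟨a, ha, ha'⟩, by simpa [f] using hay⟩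
    · rintro ⟨a, hay⟩
      exact mem_sup_of_sub_starProjection_eq (mem_inf.1 a.2).1 (by simpa [f] using hay)
  rw [hsup]
  exact (hf.isClosed_range f.uniformContinuous).preimage Wᗮ.starProjection.continuous

theorem friedrichsCos_orthogonal_le (hV : IsClosed (V : Set H)) (hW : IsClosed (W : Set H)) :
    friedrichsCos Vᗮ Wᗮ ≤ friedrichsCos V W := by
  rcases le_or_gt 1 (friedrichsCos V W) with h | h
  · exact (friedrichsCos_le_one _ _).trans h
  have : CompleteSpace V := hV.completeSpace_coe
  have : CompleteSpace W := hW.completeSpace_coe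
  have : CompleteSpace (V ⊓ W : Submodule ℝ H) := (hV.inter hW).completeSpace_coe
  have hc := friedrichsCos_nonneg_s13 V W
  refine friedrichsCos_le hc fun x hx z hz _ hzo hx1 hz1 => ?_
  have hzVW : z ∈ V ⊔ W := by
    rwa [inf_orthogonal, orthogonal_orthogonal_eq_closure,
      (isClosed_sup_of_friedrichsCos_lt_one hV hW h).submodule_topologicalClosure_eq] at hzo
  have hPz := sqrt_one_sub_friedrichsCos_sq_mul_norm_le_norm_starProjection hz hzVW
  have hQz : ‖z - V.starProjection z‖ ≤ friedrichsCos V W := by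
    have hpyth := V.norm_sq_eq_add_norm_sq_starProjection z
    rw [starProjection_orthogonal_val, hz1] at hpyth
    rw [hz1, mul_one] at hPz
    have hs2 : √(1 - friedrichsCos V W ^ 2) ^ 2 = 1 - friedrichsCos V W ^ 2 :=
      Real.sq_sqrt (by nlinarith)
    refine (sq_le_sq₀ (norm_nonneg _) hc).1 ?_
    nlinarith [Real.sqrt_nonneg (1 - friedrichsCos V W ^ 2)]
  have hxz : ⟪x, z⟫ = ⟪x, z - V.starProjection z⟫ := by
    rw [inner_sub_right, inner_left_of_mem_orthogonal (V.starProjection_apply_mem z) hx, sub_zero]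
  calc |⟪x, z⟫| ≤ ‖x‖ * ‖z - V.starProjection z‖ := hxz ▸ abs_real_inner_le_norm _ _
    _ ≤ friedrichsCos V W := by rw [hx1, one_mul]; exact hQz

theorem friedrichsCos_orthogonal (hV : IsClosed (V : Set H)) (hW : IsClosed (W : Set H)) :
    friedrichsCos Vᗮ Wᗮ = friedrichsCos V W := by
  have : CompleteSpace V := hV.completeSpace_coe
  have : CompleteSpace W := hW.completeSpace_coe
  refine (friedrichsCos_orthogonal_le hV hW).antisymm ?_
  simpa only [orthogonal_orthogonal] using
    friedrichsCos_orthogonal_le V.isClosed_orthogonal W.isClosed_orthogonal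

theorem orthogonal_inf_eq_sup_of_friedrichsCos_lt_one (hV : IsClosed (V : Set H))
    (hW : IsClosed (W : Set H)) (h : friedrichsCos V W < 1) : (V ⊓ W)ᗮ = Vᗮ ⊔ Wᗮ := by
  have : CompleteSpace V := hV.completeSpace_coe
  have : CompleteSpace W := hW.completeSpace_coe
  have hcl := isClosed_sup_of_friedrichsCos_lt_one V.isClosed_orthogonal W.isClosed_orthogonal
    ((friedrichsCos_orthogonal hV hW).trans_lt h)
  rw [← hcl.submodule_topologicalClosure_eq, ← orthogonal_orthogonal_eq_closure, ← inf_orthogonal,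
    orthogonal_orthogonal, orthogonal_orthogonal]

theorem friedrichsCos_sup_le {V₁ V₂ V₃ : Submodule ℝ H} (hV₁ : IsClosed (V₁ : Set H))
    (hV₂ : IsClosed (V₂ : Set H)) (hV₃ : IsClosed (V₃ : Set H))
    (h13 : friedrichsCos V₁ V₃ < 1) (h23 : friedrichsCos V₂ V₃ < 1) :
    friedrichsCos (V₁ ⊔ V₃) (V₂ ⊔ V₃) ≤
      (friedrichsCos V₁ V₂ + friedrichsCos V₁ V₃ * friedrichsCos V₂ V₃) /
        (√(1 - friedrichsCos V₁ V₃ ^ 2) * √(1 - friedrichsCos V₂ V₃ ^ 2)) := by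
  have : CompleteSpace V₃ := hV₃.completeSpace_coe
  have : CompleteSpace (V₁ ⊓ V₂ : Submodule ℝ H) := (hV₁.inter hV₂).completeSpace_coe
  have : CompleteSpace (V₁ ⊓ V₃ : Submodule ℝ H) := (hV₁.inter hV₃).completeSpace_coe
  have : CompleteSpace (V₂ ⊓ V₃ : Submodule ℝ H) := (hV₂.inter hV₃).completeSpace_coe
  have h12₀ := friedrichsCos_nonneg_s13 V₁ V₂
  have h13₀ := friedrichsCos_nonneg_s13 V₁ V₃
  have h23₀ := friedrichsCos_nonneg_s13 V₂ V₃
  set s13 := √(1 - friedrichsCos V₁ V₃ ^ 2)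
  set s23 := √(1 - friedrichsCos V₂ V₃ ^ 2)
  have hs13 : 0 < s13 := Real.sqrt_pos.2 (by nlinarith)
  have hs23 : 0 < s23 := Real.sqrt_pos.2 (by nlinarith)
  have h3 : V₃ ≤ (V₁ ⊔ V₃) ⊓ (V₂ ⊔ V₃) := le_inf le_sup_right le_sup_right
  have h12 : V₁ ⊓ V₂ ≤ (V₁ ⊔ V₃) ⊓ (V₂ ⊔ V₃) := inf_le_inf le_sup_left le_sup_left
  refine friedrichsCos_le (by positivity) fun u hu v hv hu' hv' hu1 hv1 => ?_
  obtain ⟨a, ha, ha', hau⟩ := exists_sub_starProjection_eq hu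
  obtain ⟨b, hb, hb', hbv⟩ := exists_sub_starProjection_eq hv
  rw [(V₃.starProjection_apply_eq_zero_iff).2 (orthogonal_le h3 hu'), sub_zero] at hau
  rw [(V₃.starProjection_apply_eq_zero_iff).2 (orthogonal_le h3 hv'), sub_zero] at hbv
  subst hau hbv
  have hna := (sqrt_one_sub_friedrichsCos_sq_mul_norm_le ha ha').trans hu1.le
  have hnb := (sqrt_one_sub_friedrichsCos_sq_mul_norm_le hb hb').trans hv1.le
  refine (abs_inner_sub_starProjection_le ha ha' hb hb' (orthogonal_le h12 hu')
    (orthogonal_le h12 hv')).trans ?_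
  rw [le_div_iff₀ (by positivity)]
  calc _ = (friedrichsCos V₁ V₂ + friedrichsCos V₁ V₃ * friedrichsCos V₂ V₃) *
        ((s13 * ‖a‖) * (s23 * ‖b‖)) := by ring
    _ ≤ (friedrichsCos V₁ V₂ + friedrichsCos V₁ V₃ * friedrichsCos V₂ V₃) * 1 := by
        gcongr
        exact mul_le_one₀ hna (by positivity) hnb
    _ = _ := mul_one _

end Complete

end FriedrichsCos

theorem cos_angle_sum_and_inter_bound_general
    {H : Type*} [NormedAddCommGroup H] [InnerProductSpace ℝ H] [CompleteSpace H]
    (V₁ V₂ V₃ : Submodule ℝ H)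
    (hV₁ : IsClosed (V₁ : Set H)) (hV₂ : IsClosed (V₂ : Set H)) (hV₃ : IsClosed (V₃ : Set H))
    (h13 : friedrichsCos V₁ V₃ < 1) (h23 : friedrichsCos V₂ V₃ < 1) :
    friedrichsCos (V₁ ⊔ V₃) (V₂ ⊔ V₃) ≤
      (friedrichsCos V₁ V₂ + friedrichsCos V₁ V₃ * friedrichsCos V₂ V₃) /
        (Real.sqrt (1 - friedrichsCos V₁ V₃ ^ 2) * Real.sqrt (1 - friedrichsCos V₂ V₃ ^ 2)) ∧
    friedrichsCos (V₁ ⊓ V₃) (V₂ ⊓ V₃) ≤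
      (friedrichsCos V₁ V₂ + friedrichsCos V₁ V₃ * friedrichsCos V₂ V₃) /
        (Real.sqrt (1 - friedrichsCos V₁ V₃ ^ 2) * Real.sqrt (1 - friedrichsCos V₂ V₃ ^ 2)) := by
  refine ⟨friedrichsCos_sup_le hV₁ hV₂ hV₃ h13 h23, ?_⟩
  have hdual := friedrichsCos_sup_le V₁.isClosed_orthogonal V₂.isClosed_orthogonal
    V₃.isClosed_orthogonal ((friedrichsCos_orthogonal hV₁ hV₃).trans_lt h13)
    ((friedrichsCos_orthogonal hV₂ hV₃).trans_lt h23)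
  rwa [← orthogonal_inf_eq_sup_of_friedrichsCos_lt_one hV₁ hV₃ h13,
    ← orthogonal_inf_eq_sup_of_friedrichsCos_lt_one hV₂ hV₃ h23,
    friedrichsCos_orthogonal (hV₁.inter hV₃) (hV₂.inter hV₃), friedrichsCos_orthogonal hV₁ hV₂,
    friedrichsCos_orthogonal hV₁ hV₃, friedrichsCos_orthogonal hV₂ hV₃] at hdual

theorem cos_angle_sum_and_inter_bound
    {H : Type*} [NormedAddCommGroup H] [InnerProductSpace ℝ H] [CompleteSpace H]
    (V₁ V₂ V₃ : Submodule ℝ H)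
    (hV₁ : IsClosed (V₁ : Set H)) (hV₂ : IsClosed (V₂ : Set H)) (hV₃ : IsClosed (V₃ : Set H))
    (hsum₁ : IsClosed ((V₁ ⊔ V₃ : Submodule ℝ H) : Set H))
    (hsum₂ : IsClosed ((V₂ ⊔ V₃ : Submodule ℝ H) : Set H))
    (h13 : friedrichsCos V₁ V₃ < 1) (h23 : friedrichsCos V₂ V₃ < 1) :
    friedrichsCos (V₁ ⊔ V₃) (V₂ ⊔ V₃) ≤
      (friedrichsCos V₁ V₂ + friedrichsCos V₁ V₃ * friedrichsCos V₂ V₃) /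
        (Real.sqrt (1 - friedrichsCos V₁ V₃ ^ 2) * Real.sqrt (1 - friedrichsCos V₂ V₃ ^ 2)) ∧
    friedrichsCos (V₁ ⊓ V₃) (V₂ ⊓ V₃) ≤
      (friedrichsCos V₁ V₂ + friedrichsCos V₁ V₃ * friedrichsCos V₂ V₃) /
        (Real.sqrt (1 - friedrichsCos V₁ V₃ ^ 2) * Real.sqrt (1 - friedrichsCos V₂ V₃ ^ 2)) :=
  cos_angle_sum_and_inter_bound_general V₁ V₂ V₃ hV₁ hV₂ hV₃ h13 h23
end
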